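/- arXiv:1704.00755 — 4 statements merged into one kernel-verified Lean document; each statement's English description precedes it below -/
import Mathlib

section
/- Let X, Y be closed subsets of Euclidean spaces containing 0 and let h : X → Y be a homeomorphism with h(0) = 0 satisfying (1/c)‖p - q‖^{1/α} ≤ ‖h(p) - h(q)‖ ≤ c‖p - q‖^α for all p, q ∈ X, where c > 0 and 0 < α ≤ 1. Let Γ₁, Γ₂ ⊆ X be closed with Γ₁ ∩ Γ₂ = {0}, and assume the contacts Cont(Γ₁, Γ₂) and Cont(h(Γ₁), h(Γ₂)) (defined as limits of log f(r)/log r as r → 0⁺, where f is the separation function) exist and are finite. Then α² · Cont(h(Γ₁), h(Γ₂)) ≤ Cont(Γ₁, Γ₂) ≤ (1/α²) · Cont(h(Γ₁), h(Γ₂)). -/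
/-! If `f` is the separation function of `(Γ₁, Γ₂)`, the upper Hölder bound sends a pair
of norm `≥ r` at distance close to `f(r)` to a pair of norm `≥ r^{1/α}/c` at distance
`≤ c f(r)^α`; hence `f_{hΓ}(r^{1/α}/c) ≤ c f_Γ(r)^α`, and dividing the logarithms by
`log (r^{1/α}/c) ~ log r / α` gives `Cont(hΓ₁, hΓ₂) ≥ α² Cont(Γ₁, Γ₂)`. The inverse of `h` is
again bi-`α`-Hölder, which gives the other inequality.

The logarithmic comparison needs positive separations. When the separation of `(Γ₁, Γ₂)`
vanishes along radii tending to `0` its contact is `0`, and `0` is a lower bound for every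
contact because the separation function is bounded near `0`. -/

open Set Filter

/-- The separation function `f_{Γ₁,Γ₂}(r)`. -/
noncomputable def sep {E : Type*} [NormedAddCommGroup E] (Γ₁ Γ₂ : Set E) (r : ℝ) : ℝ :=
  sInf {d : ℝ | ∃ γ₁ ∈ Γ₁, ∃ γ₂ ∈ Γ₂, r ≤ ‖γ₁‖ ∧ r ≤ ‖γ₂‖ ∧ d = ‖γ₁ - γ₂‖}

/-- `Cont(Γ₁,Γ₂) = L`. -/
def hasCont {E : Type*} [NormedAddCommGroup E] (Γ₁ Γ₂ : Set E) (L : ℝ) : Prop :=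
  Tendsto (fun r : ℝ => Real.log (sep Γ₁ Γ₂ r) / Real.log r) (nhdsWithin 0 (Ioi 0)) (nhds L)

open Topology Real

variable {E F : Type*} [NormedAddCommGroup E] [NormedAddCommGroup F]

def IsBiHolderOn (c α : ℝ) (h : E → F) (X : Set E) : Prop :=
  ∀ p ∈ X, ∀ q ∈ X,
    (1 / c) * ‖p - q‖ ^ (1 / α) ≤ ‖h p - h q‖ ∧ ‖h p - h q‖ ≤ c * ‖p - q‖ ^ α

def sepSet (Γ₁ Γ₂ : Set E) (r : ℝ) : Set ℝ :=
  {d : ℝ | ∃ γ₁ ∈ Γ₁, ∃ γ₂ ∈ Γ₂, r ≤ ‖γ₁‖ ∧ r ≤ ‖γ₂‖ ∧ d = ‖γ₁ - γ₂‖}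

section Separation

variable {Γ₁ Γ₂ : Set E} {r r' : ℝ}

theorem sep_eq_sInf : sep Γ₁ Γ₂ r = sInf (sepSet Γ₁ Γ₂ r) := rfl

theorem sepSet_subset_Ici : sepSet Γ₁ Γ₂ r ⊆ Ici 0 := by
  rintro _ ⟨_, _, _, _, _, _, rfl⟩
  exact norm_nonneg _

theorem sep_nonneg : 0 ≤ sep Γ₁ Γ₂ r :=
  Real.sInf_nonneg fun _ hd => sepSet_subset_Ici hd

theorem bddBelow_sepSet : BddBelow (sepSet Γ₁ Γ₂ r) :=
  ⟨0, fun _ hd => sepSet_subset_Ici hd⟩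

theorem sep_le_norm_sub {γ₁ γ₂ : E} (h₁ : γ₁ ∈ Γ₁) (h₂ : γ₂ ∈ Γ₂) (hr₁ : r ≤ ‖γ₁‖)
    (hr₂ : r ≤ ‖γ₂‖) : sep Γ₁ Γ₂ r ≤ ‖γ₁ - γ₂‖ :=
  csInf_le bddBelow_sepSet ⟨γ₁, h₁, γ₂, h₂, hr₁, hr₂, rfl⟩

theorem le_sep {b : ℝ} (hne : (sepSet Γ₁ Γ₂ r).Nonempty)
    (h : ∀ γ₁ ∈ Γ₁, ∀ γ₂ ∈ Γ₂, r ≤ ‖γ₁‖ → r ≤ ‖γ₂‖ → b ≤ ‖γ₁ - γ₂‖) : b ≤ sep Γ₁ Γ₂ r := by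
  refine le_csInf hne ?_
  rintro _ ⟨γ₁, h₁, γ₂, h₂, hr₁, hr₂, rfl⟩
  exact h γ₁ h₁ γ₂ h₂ hr₁ hr₂

theorem sep_mono (hrr' : r ≤ r') (hne : (sepSet Γ₁ Γ₂ r').Nonempty) :
    sep Γ₁ Γ₂ r ≤ sep Γ₁ Γ₂ r' := by
  refine csInf_le_csInf bddBelow_sepSet hne ?_
  rintro _ ⟨γ₁, h₁, γ₂, h₂, hr₁, hr₂, rfl⟩
  exact ⟨γ₁, h₁, γ₂, h₂, hrr'.trans hr₁, hrr'.trans hr₂, rfl⟩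

theorem sep_eq_zero_of_sepSet_eq_empty (h : sepSet Γ₁ Γ₂ r = ∅) : sep Γ₁ Γ₂ r = 0 := by
  rw [sep_eq_sInf, h, Real.sInf_empty]

theorem sepSet_nonempty_of_sep_pos (h : 0 < sep Γ₁ Γ₂ r) : (sepSet Γ₁ Γ₂ r).Nonempty :=
  nonempty_iff_ne_empty.2 fun he => h.ne' (sep_eq_zero_of_sepSet_eq_empty he)

theorem exists_eventually_sep_le (Γ₁ Γ₂ : Set E) :
    ∃ M, ∀ᶠ r in 𝓝[>] 0, sep Γ₁ Γ₂ r ≤ M := by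
  by_cases h : ∃ r₀ > 0, (sepSet Γ₁ Γ₂ r₀).Nonempty
  · obtain ⟨r₀, hr₀, hne⟩ := h
    exact ⟨sep Γ₁ Γ₂ r₀, mem_of_superset (Ioc_mem_nhdsGT hr₀) fun r hr => sep_mono hr.2 hne⟩
  · push Not at h
    exact ⟨0, eventually_nhdsWithin_of_forall fun r hr =>
      (sep_eq_zero_of_sepSet_eq_empty (h r hr)).le⟩

end Separation

section Contact

variable {Γ₁ Γ₂ : Set E} {K : ℝ}

theorem hasCont.nonneg (hK : hasCont Γ₁ Γ₂ K) : 0 ≤ K := by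
  obtain ⟨M, hM⟩ := exists_eventually_sep_le Γ₁ Γ₂
  have hlim : Tendsto (fun r => M / log r) (𝓝[>] 0) (𝓝 0) := by
    have := tendsto_log_nhdsGT_zero.inv_tendsto_atBot.const_mul M
    rw [mul_zero] at this
    exact this.congr fun r => (div_eq_mul_inv M (log r)).symm
  refine le_of_tendsto_of_tendsto hlim hK ?_
  filter_upwards [hM, Ioo_mem_nhdsGT one_pos] with r hMr hr
  exact div_le_div_of_nonpos_of_le (log_neg hr.1 hr.2).le ((log_le_self sep_nonneg).trans hMr)

theorem hasCont.eq_zero_of_frequently_sep_eq_zero (hK : hasCont Γ₁ Γ₂ K)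
    (h : ∃ᶠ r in 𝓝[>] 0, sep Γ₁ Γ₂ r = 0) : K = 0 :=
  tendsto_nhds_unique_of_frequently_eq hK tendsto_const_nhds
    (h.mono fun r hr => by rw [hr, log_zero, zero_div])

end Contact

theorem tendsto_const_mul_rpow_nhdsGT_zero {a b : ℝ} (ha : 0 < a) (hb : 0 < b) :
    Tendsto (fun r : ℝ => a * r ^ b) (𝓝[>] 0) (𝓝[>] 0) := by
  refine tendsto_nhdsWithin_iff.2
    ⟨?_, eventually_nhdsWithin_of_forall fun r hr => mul_pos ha (rpow_pos_of_pos hr b)⟩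
  have hcont : ContinuousAt (fun r : ℝ => a * r ^ b) 0 :=
    continuousAt_const.mul (continuousAt_rpow_const _ _ (Or.inr hb.le))
  simpa only [zero_rpow hb.ne', mul_zero] using hcont.tendsto.mono_left nhdsWithin_le_nhds

theorem mul_le_mul_of_tendsto_log_div_log {f₁ f₂ : ℝ → ℝ} {a b C β K₁ K₂ : ℝ}
    (ha : 0 < a) (hb : 0 < b) (hC : 0 < C)
    (hK₁ : Tendsto (fun r => log (f₁ r) / log r) (𝓝[>] 0) (𝓝 K₁))
    (hK₂ : Tendsto (fun r => log (f₂ r) / log r) (𝓝[>] 0) (𝓝 K₂))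
    (hf₁ : ∀ᶠ r in 𝓝[>] 0, 0 < f₁ r) (hf₂ : ∀ᶠ r in 𝓝[>] 0, 0 < f₂ (a * r ^ b))
    (hle : ∀ᶠ r in 𝓝[>] 0, f₂ (a * r ^ b) ≤ C * f₁ r ^ β) :
    β * K₁ ≤ b * K₂ := by
  have hσ := tendsto_const_mul_rpow_nhdsGT_zero ha hb
  have hinv : Tendsto (fun r => (log r)⁻¹) (𝓝[>] 0) (𝓝 0) :=
    tendsto_log_nhdsGT_zero.inv_tendsto_atBot
  have hsmall : ∀ᶠ r in 𝓝[>] 0, r ∈ Ioo (0 : ℝ) 1 := Ioo_mem_nhdsGT one_pos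
  have hnum : Tendsto (fun r => (log C + β * log (f₁ r)) / log r) (𝓝[>] 0) (𝓝 (β * K₁)) := by
    have := (hinv.const_mul (log C)).add (hK₁.const_mul β)
    simp only [mul_zero, zero_add] at this
    refine this.congr fun r => ?_
    rw [add_div, mul_div_assoc, div_eq_mul_inv (log C)]
  have hden : Tendsto (fun r => log (a * r ^ b) / log r) (𝓝[>] 0) (𝓝 b) := by
    have := (hinv.const_mul (log a)).add_const b
    rw [mul_zero, zero_add] at this
    refine this.congr' ?_
    filter_upwards [hsmall] with r hr
    rw [log_mul ha.ne' (rpow_pos_of_pos hr.1 b).ne', log_rpow hr.1,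
      add_div, mul_div_cancel_right₀ _ (log_neg hr.1 hr.2).ne, div_eq_mul_inv]
  have hlow : Tendsto (fun r => (log C + β * log (f₁ r)) / log (a * r ^ b)) (𝓝[>] 0)
      (𝓝 (β * K₁ / b)) := by
    refine (hnum.div hden hb.ne').congr' ?_
    filter_upwards [hsmall] with r hr
    exact div_div_div_cancel_right₀ (log_neg hr.1 hr.2).ne _ _
  have hbound : β * K₁ / b ≤ K₂ := by
    refine le_of_tendsto_of_tendsto hlow (hK₂.comp hσ) ?_
    filter_upwards [hf₁, hf₂, hle, hσ.eventually hsmall] with r h₁ h₂ hr hσr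
    have hlog : log (f₂ (a * r ^ b)) ≤ log C + β * log (f₁ r) := by
      rw [← log_rpow h₁, ← log_mul hC.ne' (rpow_pos_of_pos h₁ β).ne']
      exact log_le_log h₂ hr
    exact div_le_div_of_nonpos_of_le (log_neg hσr.1 hσr.2).le hlog
  rwa [div_le_iff₀ hb, mul_comm K₂] at hbound

namespace IsBiHolderOn

variable {c α : ℝ} {h : E → F} {X : Set E}

theorem rpow_le_norm (hh : IsBiHolderOn c α h X) (hc : 0 < c) (hα : 0 < α) (h0X : 0 ∈ X)
    (h0 : h 0 = 0) {p : E} (hp : p ∈ X) {r : ℝ} (hr : 0 ≤ r) (hrp : r ≤ ‖p‖) :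
    1 / c * r ^ (1 / α) ≤ ‖h p‖ := by
  have hlow := (hh p hp 0 h0X).1
  rw [h0, sub_zero, sub_zero] at hlow
  exact le_trans (by gcongr) hlow

variable {Γ₁ Γ₂ : Set E} {r : ℝ}

theorem sepSet_image_nonempty (hh : IsBiHolderOn c α h X) (hc : 0 < c) (hα : 0 < α)
    (h0X : 0 ∈ X) (h0 : h 0 = 0) (hΓ₁X : Γ₁ ⊆ X) (hΓ₂X : Γ₂ ⊆ X) (hr : 0 ≤ r)
    (hne : (sepSet Γ₁ Γ₂ r).Nonempty) :
    (sepSet (h '' Γ₁) (h '' Γ₂) (1 / c * r ^ (1 / α))).Nonempty := by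
  obtain ⟨_, γ₁, h₁, γ₂, h₂, hr₁, hr₂, rfl⟩ := hne
  exact ⟨_, h γ₁, mem_image_of_mem h h₁, h γ₂, mem_image_of_mem h h₂,
    hh.rpow_le_norm hc hα h0X h0 (hΓ₁X h₁) hr hr₁,
    hh.rpow_le_norm hc hα h0X h0 (hΓ₂X h₂) hr hr₂, rfl⟩

theorem sep_image_le (hh : IsBiHolderOn c α h X) (hc : 0 < c) (hα : 0 < α)
    (h0X : 0 ∈ X) (h0 : h 0 = 0) (hΓ₁X : Γ₁ ⊆ X) (hΓ₂X : Γ₂ ⊆ X) (hr : 0 ≤ r)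
    (hne : (sepSet Γ₁ Γ₂ r).Nonempty) :
    sep (h '' Γ₁) (h '' Γ₂) (1 / c * r ^ (1 / α)) ≤ c * sep Γ₁ Γ₂ r ^ α := by
  set S := sep (h '' Γ₁) (h '' Γ₂) (1 / c * r ^ (1 / α))
  have hS : 0 ≤ S / c := div_nonneg sep_nonneg hc.le
  have key : (S / c) ^ α⁻¹ ≤ sep Γ₁ Γ₂ r := by
    refine le_sep hne fun γ₁ h₁ γ₂ h₂ hr₁ hr₂ => ?_
    rw [rpow_inv_le_iff_of_pos hS (norm_nonneg _) hα, div_le_iff₀' hc]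
    calc S ≤ ‖h γ₁ - h γ₂‖ :=
          sep_le_norm_sub (mem_image_of_mem h h₁) (mem_image_of_mem h h₂)
            (hh.rpow_le_norm hc hα h0X h0 (hΓ₁X h₁) hr hr₁)
            (hh.rpow_le_norm hc hα h0X h0 (hΓ₂X h₂) hr hr₂)
      _ ≤ c * ‖γ₁ - γ₂‖ ^ α := (hh γ₁ (hΓ₁X h₁) γ₂ (hΓ₂X h₂)).2
  rwa [rpow_inv_le_iff_of_pos hS sep_nonneg hα, div_le_iff₀' hc] at key

theorem of_leftInvOn (hh : IsBiHolderOn c α h X) (hc : 0 < c) (hα : 0 < α) {g : F → E}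
    {Y : Set F} (hg : LeftInvOn g h X) (hsurj : SurjOn h X Y) :
    IsBiHolderOn (max (c ^ α) (c ^ (1 / α))) α g Y := by
  intro p hp q hq
  obtain ⟨x, hx, rfl⟩ := hsurj hp
  obtain ⟨y, hy, rfl⟩ := hsurj hq
  rw [hg hx, hg hy]
  obtain ⟨hlow, hup⟩ := hh x hx y hy
  have hcα : 0 < c ^ (1 / α) := rpow_pos_of_pos hc _
  constructor
  · calc 1 / max (c ^ α) (c ^ (1 / α)) * ‖h x - h y‖ ^ (1 / α)
        ≤ 1 / c ^ (1 / α) * (c * ‖x - y‖ ^ α) ^ (1 / α) := by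
          gcongr
          exact le_max_right _ _
      _ = ‖x - y‖ := by
          rw [mul_rpow hc.le (by positivity), ← rpow_mul (norm_nonneg _),
            mul_one_div_cancel hα.ne', rpow_one]
          field_simp
  · have hxy : ‖x - y‖ ^ (1 / α) ≤ c * ‖h x - h y‖ := by
      rwa [one_div_mul_eq_div, div_le_iff₀' hc] at hlow
    calc ‖x - y‖ = (‖x - y‖ ^ (1 / α)) ^ α := by
          rw [← rpow_mul (norm_nonneg _), one_div_mul_cancel hα.ne', rpow_one]
      _ ≤ (c * ‖h x - h y‖) ^ α := by gcongr
      _ = c ^ α * ‖h x - h y‖ ^ α := mul_rpow hc.le (norm_nonneg _)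
      _ ≤ max (c ^ α) (c ^ (1 / α)) * ‖h x - h y‖ ^ α := by
          gcongr
          exact le_max_left _ _

end IsBiHolderOn

theorem sq_mul_le_of_hasCont_image {φ : E → F} {ψ : F → E} {X : Set E} {Y : Set F}
    {c c' α : ℝ} (hc : 0 < c) (hc' : 0 < c') (hα : 0 < α)
    (hφ : IsBiHolderOn c α φ X) (hψ : IsBiHolderOn c' α ψ Y)
    (hψφ : LeftInvOn ψ φ X) (hφXY : MapsTo φ X Y) (h0X : 0 ∈ X) (hφ0 : φ 0 = 0)
    {Γ₁ Γ₂ : Set E} (hΓ₁X : Γ₁ ⊆ X) (hΓ₂X : Γ₂ ⊆ X) {K₁ K₂ : ℝ}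
    (hK₁ : hasCont Γ₁ Γ₂ K₁) (hK₂ : hasCont (φ '' Γ₁) (φ '' Γ₂) K₂) :
    α ^ 2 * K₁ ≤ K₂ := by
  by_cases hzero : ∃ᶠ r in 𝓝[>] 0, sep Γ₁ Γ₂ r = 0
  · rw [hK₁.eq_zero_of_frequently_sep_eq_zero hzero, mul_zero]
    exact hK₂.nonneg
  have hpos : ∀ᶠ r in 𝓝[>] 0, 0 < sep Γ₁ Γ₂ r :=
    (not_frequently.1 hzero).mono fun _ hr => sep_nonneg.lt_of_ne' hr
  have hne : ∀ᶠ r in 𝓝[>] 0, (sepSet Γ₁ Γ₂ r).Nonempty :=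
    hpos.mono fun _ => sepSet_nonempty_of_sep_pos
  have hr0 : ∀ᶠ r : ℝ in 𝓝[>] 0, 0 < r := self_mem_nhdsWithin
  have h0Y : 0 ∈ Y := hφ0 ▸ hφXY h0X
  have hψ0 : ψ 0 = 0 := by simpa only [hφ0] using hψφ h0X
  -- positivity of the image separation comes from the same estimate for the inverse map
  have hpos' : ∀ᶠ r in 𝓝[>] 0, 0 < sep (φ '' Γ₁) (φ '' Γ₂) (1 / c * r ^ (1 / α)) := by
    have hσ := (tendsto_const_mul_rpow_nhdsGT_zero (one_div_pos.2 hc') (one_div_pos.2 hα)).comp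
      (tendsto_const_mul_rpow_nhdsGT_zero (one_div_pos.2 hc) (one_div_pos.2 hα))
    filter_upwards [hne, hr0, hσ.eventually hpos] with r hner hr hposr
    have hback := hψ.sep_image_le hc' hα h0Y hψ0 (hφXY.mono_left hΓ₁X).image_subset
      (hφXY.mono_left hΓ₂X).image_subset (by positivity)
      (hφ.sepSet_image_nonempty hc hα h0X hφ0 hΓ₁X hΓ₂X hr.le hner)
    rw [hψφ.image_image' hΓ₁X, hψφ.image_image' hΓ₂X] at hback
    refine sep_nonneg.lt_of_ne' fun hzero' => ?_
    rw [hzero', zero_rpow hα.ne', mul_zero] at hback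
    exact (hposr.trans_le hback).false
  have hle : ∀ᶠ r in 𝓝[>] 0,
      sep (φ '' Γ₁) (φ '' Γ₂) (1 / c * r ^ (1 / α)) ≤ c * sep Γ₁ Γ₂ r ^ α := by
    filter_upwards [hne, hr0] with r hner hr
    exact hφ.sep_image_le hc hα h0X hφ0 hΓ₁X hΓ₂X hr.le hner
  have hcmp := mul_le_mul_of_tendsto_log_div_log (f₁ := sep Γ₁ Γ₂)
    (f₂ := sep (φ '' Γ₁) (φ '' Γ₂)) (one_div_pos.2 hc) (one_div_pos.2 hα) hc hK₁ hK₂ hpos hpos' hle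
  calc α ^ 2 * K₁ = α * (α * K₁) := by ring
    _ ≤ α * (1 / α * K₂) := by gcongr
    _ = K₂ := by field_simp

theorem cont_bound_of_biHolder_general {n m : ℕ}
    (X : Set (EuclideanSpace ℝ (Fin n))) (Y : Set (EuclideanSpace ℝ (Fin m)))
    (h0X : (0 : EuclideanSpace ℝ (Fin n)) ∈ X)
    (h : EuclideanSpace ℝ (Fin n) → EuclideanSpace ℝ (Fin m))
    (hbij : Set.BijOn h X Y) (h0 : h 0 = 0)
    (c α : ℝ) (hc : 0 < c) (hα : 0 < α)
    (hHolder : ∀ p ∈ X, ∀ q ∈ X,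
      (1 / c) * ‖p - q‖ ^ (1 / α) ≤ ‖h p - h q‖ ∧ ‖h p - h q‖ ≤ c * ‖p - q‖ ^ α)
    (Γ₁ Γ₂ : Set (EuclideanSpace ℝ (Fin n)))
    (hΓ₁X : Γ₁ ⊆ X) (hΓ₂X : Γ₂ ⊆ X)
    (K₁ K₂ : ℝ) (hK₁ : hasCont Γ₁ Γ₂ K₁) (hK₂ : hasCont (h '' Γ₁) (h '' Γ₂) K₂) :
    α ^ 2 * K₂ ≤ K₁ ∧ K₁ ≤ (1 / α ^ 2) * K₂ := by
  set g := Function.invFunOn h X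
  have hinv : InvOn g h X Y := hbij.invOn_invFunOn
  have hg : IsBiHolderOn (max (c ^ α) (c ^ (1 / α))) α g Y :=
    IsBiHolderOn.of_leftInvOn hHolder hc hα hinv.1 hbij.surjOn
  have hC : 0 < max (c ^ α) (c ^ (1 / α)) := lt_max_of_lt_left (rpow_pos_of_pos hc α)
  have h0Y : 0 ∈ Y := h0 ▸ hbij.mapsTo h0X
  have hg0 : g 0 = 0 := by simpa only [h0] using hinv.1 h0X
  have hK₁' : hasCont (g '' (h '' Γ₁)) (g '' (h '' Γ₂)) K₁ := by
    rwa [hinv.1.image_image' hΓ₁X, hinv.1.image_image' hΓ₂X]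
  refine ⟨sq_mul_le_of_hasCont_image hC hc hα hg hHolder hinv.2 hbij.surjOn.mapsTo_invFunOn
    h0Y hg0 (hbij.mapsTo.mono_left hΓ₁X).image_subset (hbij.mapsTo.mono_left hΓ₂X).image_subset
    hK₂ hK₁', ?_⟩
  have hforward := sq_mul_le_of_hasCont_image hc hC hα hHolder hg hinv.1 hbij.mapsTo h0X h0
    hΓ₁X hΓ₂X hK₁ hK₂
  rw [one_div, inv_mul_eq_div, le_div_iff₀ (by positivity), mul_comm]
  exact hforward

/-- Proposition 1: a bi-`α`-Hölder homeomorphism `h : X → Y` distorts contacts of pairs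
of closed subsets by a factor at most `1/α²`. -/
theorem cont_bound_of_biHolder {n m : ℕ}
    (X : Set (EuclideanSpace ℝ (Fin n))) (Y : Set (EuclideanSpace ℝ (Fin m)))
    (hX : IsClosed X) (hY : IsClosed Y) (h0X : (0 : EuclideanSpace ℝ (Fin n)) ∈ X)
    (h : EuclideanSpace ℝ (Fin n) → EuclideanSpace ℝ (Fin m))
    (hbij : Set.BijOn h X Y) (h0 : h 0 = 0)
    (c α : ℝ) (hc : 0 < c) (hα : 0 < α) (hα1 : α ≤ 1)
    (hHolder : ∀ p ∈ X, ∀ q ∈ X,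
      (1 / c) * ‖p - q‖ ^ (1 / α) ≤ ‖h p - h q‖ ∧ ‖h p - h q‖ ≤ c * ‖p - q‖ ^ α)
    (Γ₁ Γ₂ : Set (EuclideanSpace ℝ (Fin n)))
    (hΓ₁ : IsClosed Γ₁) (hΓ₂ : IsClosed Γ₂) (hΓ₁X : Γ₁ ⊆ X) (hΓ₂X : Γ₂ ⊆ X)
    (hint : Γ₁ ∩ Γ₂ = {0})
    (K₁ K₂ : ℝ) (hK₁ : hasCont Γ₁ Γ₂ K₁) (hK₂ : hasCont (h '' Γ₁) (h '' Γ₂) K₂) :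
    α ^ 2 * K₂ ≤ K₁ ∧ K₁ ≤ (1 / α ^ 2) * K₂ :=
  cont_bound_of_biHolder_general X Y h0X h hbij h0 c α hc hα hHolder Γ₁ Γ₂ hΓ₁X hΓ₂X K₁ K₂ hK₁ hK₂
end

section
/- Let C = {(x, y) ∈ ℂ² : y² = x⁵} and C̃ = {(x, y) ∈ ℂ² : y² = x³}, as germs at 0 ∈ ℂ². If α ∈ (0, 1] and there exists a bi-α-Hölder homeomorphism F : (C, 0) → (C̃, 0), then α⁴ ≤ 1/2. -/
open Metric

/-- The curve `y² = x⁵` in `ℂ²`. -/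
def curveC : Set (EuclideanSpace ℂ (Fin 2)) := {p | (p 1) ^ 2 = (p 0) ^ 5}

/-- The curve `y² = x³` in `ℂ²`. -/
def curveCt : Set (EuclideanSpace ℂ (Fin 2)) := {p | (p 1) ^ 2 = (p 0) ^ 3}

/-- `(X,0)` and `(Y,0)` are bi-`α`-Hölder homeomorphic as germs. -/
def BiHolderGerm (X Y : Set (EuclideanSpace ℂ (Fin 2))) (α : ℝ) : Prop :=
  ∃ (U V : Set (EuclideanSpace ℂ (Fin 2))) (F : EuclideanSpace ℂ (Fin 2) → EuclideanSpace ℂ (Fin 2)) (c : ℝ),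
    IsOpen U ∧ IsOpen V ∧ (0 : EuclideanSpace ℂ (Fin 2)) ∈ U ∧ (0 : EuclideanSpace ℂ (Fin 2)) ∈ V ∧
    0 < c ∧ F 0 = 0 ∧ Set.BijOn F (X ∩ U) (Y ∩ V) ∧
    ∀ p ∈ X ∩ U, ∀ q ∈ X ∩ U,
      (1 / c) * ‖p - q‖ ^ (1 / α) ≤ ‖F p - F q‖ ∧ ‖F p - F q‖ ≤ c * ‖p - q‖ ^ α

/-!
Test the map on the points `p± = (t², ±t⁵)` of `y² = x⁵`, which are `2t⁵` apart. Their images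
`(a², a³)` and `(b², b³)` on the cusp are `O(t^{5α})` apart while `|a|³ ≳ t^{3/α}`; when
`α² > 3/5` this forces `b` to be close to `a` rather than to `-a`, so the segment from `a` to `b`
gives a path on the cusp from `F p₊` to `F p₋` staying `O(t^{5α})`-close to `F p₊`. Its preimage
is a path on `y² = x⁵` from `p₊` to `p₋`; it stays `O(t^{5α²})`-close to `p₊`, but along it
`y / x²` is a continuous square root of `x` going from `t` to `-t`, so it meets `Re x ≤ 0` at
distance at least `t²` from `p₊`. As `5α² > 2` this is impossible for small `t`. Hence
`α² ≤ 3/5`, and `α⁴ ≤ 9/25 < 1/2`.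
-/

open Set Filter Topology

local notation "ℂ²" => EuclideanSpace ℂ (Fin 2)

def quinticPoint (u : ℂ) : ℂ² := !₂[u ^ 2, u ^ 5]

def cuspPoint (a : ℂ) : ℂ² := !₂[a ^ 2, a ^ 3]

lemma norm_toLp_le {𝕜 : Type*} [RCLike 𝕜] (x y : 𝕜) :
    ‖(!₂[x, y] : EuclideanSpace 𝕜 (Fin 2))‖ ≤ ‖x‖ + ‖y‖ := by
  rw [EuclideanSpace.norm_eq, Real.sqrt_le_left (by positivity)]
  simp only [Fin.sum_univ_two, Matrix.cons_val_zero, Matrix.cons_val_one]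
  nlinarith [norm_nonneg x, norm_nonneg y]

lemma quinticPoint_mem_curveC (u : ℂ) : quinticPoint u ∈ curveC := by
  change (u ^ 5) ^ 2 = (u ^ 2) ^ 5
  ring

lemma cuspPoint_mem_curveCt (a : ℂ) : cuspPoint a ∈ curveCt := by
  change (a ^ 3) ^ 2 = (a ^ 2) ^ 3
  ring

lemma sq_norm_le_norm_quinticPoint (u : ℂ) : ‖u‖ ^ 2 ≤ ‖quinticPoint u‖ := by
  simpa [quinticPoint] using PiLp.norm_apply_le (quinticPoint u) 0

lemma norm_quinticPoint_le (u : ℂ) : ‖quinticPoint u‖ ≤ ‖u‖ ^ 2 + ‖u‖ ^ 5 :=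
  (norm_toLp_le _ _).trans_eq (by rw [norm_pow, norm_pow])

lemma norm_quinticPoint_sub_neg_le (u : ℂ) :
    ‖quinticPoint u - quinticPoint (-u)‖ ≤ 2 * ‖u‖ ^ 5 := by
  have h : quinticPoint u - quinticPoint (-u) = !₂[0, 2 * u ^ 5] := by
    ext i; fin_cases i <;> simp [quinticPoint]; ring
  rw [h]
  exact (norm_toLp_le _ _).trans_eq (by simp [norm_pow])

lemma sq_norm_le_norm_cuspPoint (a : ℂ) : ‖a‖ ^ 2 ≤ ‖cuspPoint a‖ := by
  simpa [cuspPoint] using PiLp.norm_apply_le (cuspPoint a) 0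

lemma norm_cuspPoint_le {a : ℂ} (ha : ‖a‖ ≤ 1) : ‖cuspPoint a‖ ≤ 2 * ‖a‖ ^ 2 := by
  have h : ‖cuspPoint a‖ ≤ ‖a‖ ^ 2 + ‖a‖ ^ 3 :=
    (norm_toLp_le _ _).trans_eq (by rw [norm_pow, norm_pow])
  nlinarith [pow_le_pow_of_le_one (norm_nonneg a) ha (show 2 ≤ 3 by norm_num)]

lemma eq_cuspPoint_of_mem_curveCt {Q : ℂ²} (hQ : Q ∈ curveCt) : Q = cuspPoint (Q 1 / Q 0) := by
  have hQ : Q 1 ^ 2 = Q 0 ^ 3 := hQ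
  by_cases h0 : Q 0 = 0
  · have h1 : Q 1 = 0 := by simpa [h0] using hQ
    ext i; fin_cases i <;> simp [cuspPoint, h0, h1]
  · ext i; fin_cases i
    · change Q 0 = (Q 1 / Q 0) ^ 2
      rw [div_pow, hQ]; field_simp
    · change Q 1 = (Q 1 / Q 0) ^ 3
      rw [div_pow, show Q 1 ^ 3 = Q 1 ^ 2 * Q 1 by ring, hQ]; field_simp

lemma div_sq_sq_of_mem_curveC {P : ℂ²} (hP : P ∈ curveC) (h0 : P 0 ≠ 0) :
    (P 1 / P 0 ^ 2) ^ 2 = P 0 := by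
  have hP : P 1 ^ 2 = P 0 ^ 5 := hP
  rw [div_pow, hP]; field_simp

lemma quinticPoint_div {u : ℂ} (hu : u ≠ 0) : quinticPoint u 1 / quinticPoint u 0 ^ 2 = u := by
  change u ^ 5 / (u ^ 2) ^ 2 = u
  field_simp

/-- Since `a² - b² = (a - b)(a + b)` is small, `b` is close to `a` or to `-a`; the second option
would make `a³ - b³` close to `2a³`, which is too large. -/
lemma norm_sub_mul_norm_le {a b : ℂ} {d : ℝ} (ha : ‖a‖ ≤ 1) (h2 : ‖a ^ 2 - b ^ 2‖ ≤ d)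
    (h3 : ‖a ^ 3 - b ^ 3‖ ≤ d) (hd : 26 * d < ‖a‖ ^ 3) : ‖a - b‖ * ‖a‖ ≤ d := by
  have hd0 : 0 ≤ d := (norm_nonneg _).trans h2
  have ha0 : 0 < ‖a‖ := lt_of_pow_lt_pow_left₀ 3 (norm_nonneg a) (by
    rw [zero_pow three_ne_zero]; linarith)
  have hprod : ‖a - b‖ * ‖a + b‖ ≤ d := by
    rw [← norm_mul]
    convert h2 using 2
    ring
  rcases le_or_gt ‖a‖ ‖a + b‖ with hab | hab
  · exact (mul_le_mul_of_nonneg_left hab (norm_nonneg _)).trans hprod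
  exfalso
  have hsub : ‖a‖ ≤ ‖a - b‖ := by
    have h := norm_add_le (a - b) (a + b)
    rw [show a - b + (a + b) = 2 * a by ring, norm_mul, Complex.norm_two] at h
    linarith
  have hsum : ‖a + b‖ * ‖a‖ ≤ d := by nlinarith [norm_nonneg (a + b)]
  have hb : ‖b‖ ≤ 2 * ‖a‖ := by
    have h := norm_sub_le (a + b) a
    rw [add_sub_cancel_left] at h
    linarith
  have hquad : ‖a ^ 2 - a * b + b ^ 2‖ ≤ 7 * ‖a‖ ^ 2 := by
    have h := norm_add_le (a ^ 2 - a * b) (b ^ 2)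
    have h' := norm_sub_le (a ^ 2) (a * b)
    rw [norm_pow] at h
    rw [norm_pow, norm_mul] at h'
    nlinarith [norm_nonneg b]
  have hcube : ‖a ^ 3 + b ^ 3‖ ≤ 7 * d := by
    rw [show a ^ 3 + b ^ 3 = (a + b) * (a ^ 2 - a * b + b ^ 2) by ring, norm_mul]
    nlinarith [norm_nonneg (a + b), pow_le_one₀ (norm_nonneg a) ha (n := 2)]
  have h := norm_sub_norm_le (2 * a ^ 3) (a ^ 3 + b ^ 3)
  rw [show 2 * a ^ 3 - (a ^ 3 + b ^ 3) = a ^ 3 - b ^ 3 by ring, norm_mul, norm_pow,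
    Complex.norm_two] at h
  linarith

lemma norm_cuspPoint_sub_le {a v : ℂ} {d : ℝ} (ha : ‖a‖ ≤ 1) (hv : ‖v - a‖ ≤ ‖a‖ / 2)
    (hd : ‖v - a‖ * ‖a‖ ≤ d) : ‖cuspPoint v - cuspPoint a‖ ≤ 10 * d := by
  have hv' : ‖v‖ ≤ 3 / 2 * ‖a‖ := by
    have h := norm_add_le (v - a) a
    rw [sub_add_cancel] at h
    linarith
  have h2 : ‖v + a‖ ≤ 5 / 2 * ‖a‖ := by linarith [norm_add_le v a]
  have h3 : ‖v ^ 2 + v * a + a ^ 2‖ ≤ 19 / 4 * ‖a‖ := by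
    have h := norm_add_le (v ^ 2 + v * a) (a ^ 2)
    have h' := norm_add_le (v ^ 2) (v * a)
    rw [norm_pow] at h
    rw [norm_pow, norm_mul] at h'
    nlinarith [norm_nonneg v, norm_nonneg a]
  have hsplit : cuspPoint v - cuspPoint a =
      !₂[(v - a) * (v + a), (v - a) * (v ^ 2 + v * a + a ^ 2)] := by
    ext i; fin_cases i <;> simp [cuspPoint] <;> ring
  rw [hsplit]
  refine (norm_toLp_le _ _).trans ?_
  rw [norm_mul, norm_mul]
  nlinarith [norm_nonneg (v - a), norm_nonneg a]

lemma continuous_cuspPoint : Continuous cuspPoint := by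
  unfold cuspPoint
  fun_prop

lemma exists_path_cuspPoint {a b : ℂ} (ha : ‖a‖ ≤ 1)
    (hab : 26 * ‖cuspPoint a - cuspPoint b‖ < ‖a‖ ^ 3) :
    ∃ γ : ℝ → ℂ², Continuous γ ∧ γ 0 = cuspPoint a ∧ γ 1 = cuspPoint b ∧ ∀ s ∈ Icc (0 : ℝ) 1,
      γ s ∈ curveCt ∧ ‖γ s - cuspPoint a‖ ≤ 10 * ‖cuspPoint a - cuspPoint b‖ := by
  have h2 : ‖a ^ 2 - b ^ 2‖ ≤ ‖cuspPoint a - cuspPoint b‖ :=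
    (PiLp.norm_apply_le (cuspPoint a - cuspPoint b) 0).trans_eq' (by simp [cuspPoint])
  have h3 : ‖a ^ 3 - b ^ 3‖ ≤ ‖cuspPoint a - cuspPoint b‖ :=
    (PiLp.norm_apply_le (cuspPoint a - cuspPoint b) 1).trans_eq' (by simp [cuspPoint])
  have hd := norm_sub_mul_norm_le ha h2 h3 hab
  have ha0 : 0 < ‖a‖ := lt_of_pow_lt_pow_left₀ 3 (norm_nonneg a) (by
    rw [zero_pow three_ne_zero]; linarith [norm_nonneg (cuspPoint a - cuspPoint b)])
  have hhalf : ‖a - b‖ ≤ ‖a‖ / 2 := by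
    nlinarith [pow_le_one₀ (norm_nonneg a) ha (n := 2)]
  refine ⟨fun s => cuspPoint (a + s * (b - a)), continuous_cuspPoint.comp (by fun_prop),
    by simp, by simp, fun s hs => ⟨cuspPoint_mem_curveCt _, norm_cuspPoint_sub_le ha ?_ ?_⟩⟩ <;>
  · have hs' : ‖a + s * (b - a) - a‖ ≤ ‖a - b‖ := by
      rw [add_sub_cancel_left, norm_mul, norm_sub_rev, Complex.norm_of_nonneg hs.1]
      exact mul_le_of_le_one_left (norm_nonneg _) hs.2
    nlinarith [norm_nonneg a]

/-- Along the path, `u = y / x²` is a continuous square root of `x`, going from `t` to `-t`, so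
its real part vanishes somewhere; there `x = u²` has nonpositive real part and is far from `t²`. -/
lemma exists_sq_le_norm_sub_quinticPoint {q : ℝ → ℂ²} (hq : ContinuousOn q (Icc 0 1))
    (hqC : MapsTo q (Icc 0 1) curveC) {t : ℝ} (h0 : q 0 = quinticPoint t)
    (h1 : q 1 = quinticPoint (-t)) (ht : 0 < t) :
    ∃ s ∈ Icc (0 : ℝ) 1, t ^ 2 ≤ ‖q s - quinticPoint t‖ := by
  by_contra! hnear
  have hre : ∀ s ∈ Icc (0 : ℝ) 1, 0 < (q s 0).re := by
    intro s hs
    have h : |(q s 0 - (t : ℂ) ^ 2).re| < t ^ 2 :=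
      ((Complex.abs_re_le_norm _).trans ((PiLp.norm_apply_le (q s - quinticPoint t) 0).trans_eq'
        (by simp [quinticPoint]))).trans_lt (hnear s hs)
    rw [← Complex.ofReal_pow, Complex.sub_re, Complex.ofReal_re] at h
    linarith [neg_abs_le ((q s 0).re - t ^ 2)]
  have hx : ∀ s ∈ Icc (0 : ℝ) 1, q s 0 ≠ 0 := fun s hs h => by simpa [h] using hre s hs
  have hg : ContinuousOn (fun s => (q s 1 / q s 0 ^ 2).re) (Icc 0 1) := by
    have hcoord : ∀ i, ContinuousOn (fun s => q s i) (Icc 0 1) := fun i =>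
      (PiLp.continuous_apply 2 _ i).comp_continuousOn hq
    exact Complex.continuous_re.comp_continuousOn
      ((hcoord 1).div ((hcoord 0).pow 2) fun s hs => pow_ne_zero 2 (hx s hs))
  have ht0 : (t : ℂ) ≠ 0 := Complex.ofReal_ne_zero.2 ht.ne'
  obtain ⟨s, hs, hgs⟩ := intermediate_value_Icc' zero_le_one hg (show (0 : ℝ) ∈ Icc _ _ by
    simp only [h0, h1, quinticPoint_div ht0, quinticPoint_div (neg_ne_zero.2 ht0)]
    simp [ht.le])
  have hpos := hre s hs
  beta_reduce at hgs
  rw [← div_sq_sq_of_mem_curveC (hqC hs) (hx s hs), sq, Complex.mul_re, hgs] at hpos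
  nlinarith

lemma le_mul_rpow_of_one_div_mul_rpow_le {x y c α : ℝ} (hx : 0 ≤ x) (hc : 0 < c) (hα : 0 < α)
    (h : 1 / c * x ^ (1 / α) ≤ y) : x ≤ (c * y) ^ α := by
  have h' : x ^ (1 / α) ≤ c * y := by rwa [one_div_mul_eq_div, div_le_iff₀' hc] at h
  calc x = (x ^ (1 / α)) ^ α := by
        rw [← Real.rpow_mul hx, one_div_mul_cancel hα.ne', Real.rpow_one]
    _ ≤ (c * y) ^ α := Real.rpow_le_rpow (by positivity) h' hα.le

lemma continuousOn_invFunOn_of_norm_sub_le_rpow {E F : Type*} [NormedAddCommGroup E]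
    [NormedAddCommGroup F] [Nonempty E] {f : E → F} {S : Set E} {c α : ℝ} (hα : 0 < α)
    (hf : ∀ z ∈ S, ∀ w ∈ S, ‖z - w‖ ≤ (c * ‖f z - f w‖) ^ α) :
    ContinuousOn (Function.invFunOn f S) (f '' S) := by
  rintro _ ⟨z, hz, rfl⟩
  have hS : ∀ Q ∈ f '' S, Function.invFunOn f S Q ∈ S ∧ f (Function.invFunOn f S Q) = Q :=
    fun Q hQ => ⟨Function.invFunOn_mem hQ, Function.invFunOn_eq hQ⟩
  have hlim : Tendsto (fun Q => (c * ‖Q - f z‖) ^ α) (𝓝[f '' S] f z) (𝓝 0) := by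
    have hcont : Continuous fun Q => (c * ‖Q - f z‖) ^ α := by fun_prop (disch := positivity)
    simpa [Real.zero_rpow hα.ne'] using
      (hcont.continuousWithinAt (s := f '' S) (x := f z)).tendsto
  refine tendsto_iff_norm_sub_tendsto_zero.2 (squeeze_zero' (Eventually.of_forall
    fun _ => norm_nonneg _) (eventually_nhdsWithin_of_forall fun Q hQ => ?_) hlim)
  have h := hf _ (hS Q hQ).1 _ (hS _ ⟨z, hz, rfl⟩).1
  rwa [(hS Q hQ).2, (hS _ ⟨z, hz, rfl⟩).2] at h

lemma sq_le_rpow_of_bijOn {U V : Set ℂ²} {F : ℂ² → ℂ²} {c α t : ℝ} {a b : ℂ} (hc : 0 ≤ c)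
    (hα : 0 < α) (hbij : BijOn F (curveC ∩ U) (curveCt ∩ V))
    (hinv : ∀ z ∈ curveC ∩ U, ∀ w ∈ curveC ∩ U, ‖z - w‖ ≤ (c * ‖F z - F w‖) ^ α)
    (ht : 0 < t) (hp : quinticPoint t ∈ U) (hp' : quinticPoint (-t) ∈ U)
    (hPa : F (quinticPoint t) = cuspPoint a) (hPb : F (quinticPoint (-t)) = cuspPoint b)
    (ha : ‖a‖ ≤ 1) (hab : 26 * ‖cuspPoint a - cuspPoint b‖ < ‖a‖ ^ 3)
    (hV : closedBall (cuspPoint a) (10 * ‖cuspPoint a - cuspPoint b‖) ⊆ V) :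
    t ^ 2 ≤ (c * (10 * ‖cuspPoint a - cuspPoint b‖)) ^ α := by
  obtain ⟨γ, hγ, hγ0, hγ1, hγmem⟩ := exists_path_cuspPoint ha hab
  set G := Function.invFunOn F (curveC ∩ U)
  have hγT : MapsTo γ (Icc 0 1) (curveCt ∩ V) := fun s hs =>
    ⟨(hγmem s hs).1, hV (mem_closedBall_iff_norm.2 (hγmem s hs).2)⟩
  have hG : ContinuousOn G (curveCt ∩ V) :=
    hbij.image_eq ▸ continuousOn_invFunOn_of_norm_sub_le_rpow hα hinv
  have hpS : quinticPoint t ∈ curveC ∩ U := ⟨quinticPoint_mem_curveC _, hp⟩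
  have hp'S : quinticPoint (-t) ∈ curveC ∩ U := ⟨quinticPoint_mem_curveC _, hp'⟩
  have hGS := hbij.surjOn.mapsTo_invFunOn
  obtain ⟨s, hs, hfar⟩ := exists_sq_le_norm_sub_quinticPoint (q := G ∘ γ)
    (hG.comp hγ.continuousOn hγT) (fun s hs => (hGS (hγT hs)).1)
    (by simp [hγ0, ← hPa, G, hbij.invOn_invFunOn.1 hpS])
    (by simp [hγ1, ← hPb, G, hbij.invOn_invFunOn.1 hp'S]) ht
  have hFG : F (G (γ s)) = γ s := hbij.surjOn.rightInvOn_invFunOn (hγT hs)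
  calc t ^ 2 ≤ ‖G (γ s) - quinticPoint t‖ := hfar
    _ ≤ (c * ‖γ s - cuspPoint a‖) ^ α := by
      have h := hinv _ (hGS (hγT hs)) _ hpS
      rwa [hFG, hPa] at h
    _ ≤ (c * (10 * ‖cuspPoint a - cuspPoint b‖)) ^ α := by
      gcongr
      exact (hγmem s hs).2

lemma eventually_mul_rpow_lt_rpow {e₁ e₂ : ℝ} (he : e₁ < e₂) (K : ℝ) :
    ∀ᶠ t in 𝓝[>] (0 : ℝ), K * t ^ e₂ < t ^ e₁ := by
  have he' : 0 < e₂ - e₁ := sub_pos.2 he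
  have hlim : Tendsto (fun t : ℝ => K * t ^ (e₂ - e₁)) (𝓝[>] 0) (𝓝 0) := by
    have h := (Real.continuousAt_rpow_const 0 _ (Or.inr he'.le)).const_mul K
    simpa [Real.zero_rpow he'.ne'] using h.tendsto.mono_left nhdsWithin_le_nhds
  filter_upwards [hlim.eventually_lt_const one_pos, self_mem_nhdsWithin] with t h (ht : 0 < t)
  calc K * t ^ e₂ = K * t ^ (e₂ - e₁) * t ^ e₁ := by
        rw [mul_assoc, ← Real.rpow_add ht, sub_add_cancel]
    _ < 1 * t ^ e₁ := by gcongr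
    _ = t ^ e₁ := one_mul _

lemma rpow_mul_pow {x t : ℝ} (hx : 0 ≤ x) (ht : 0 ≤ t) (n : ℕ) (e : ℝ) :
    (x * t ^ n) ^ e = x ^ e * t ^ (n * e) := by
  rw [Real.mul_rpow hx (by positivity), Real.rpow_natCast_mul ht]

/-- Small scales `t` satisfy all numerical conditions of the argument; the last two are where
`α² > 3/5` enters. -/
lemma eventually_scale_conditions {c α ε : ℝ} (hc : 0 < c) (hα : 0 < α) (hα2 : 3 / 5 < α ^ 2)
    (hε : 0 < ε) :
    ∀ᶠ t in 𝓝[>] (0 : ℝ), 0 < t ∧ t ^ 2 + t ^ 5 < ε ∧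
      c * (t ^ 2 + t ^ 5) ^ α + 10 * (c * (2 * t ^ 5) ^ α) < min 1 ε ∧
      (26 * (c * (2 * t ^ 5) ^ α)) ^ 2 < (1 / c * (t ^ 2) ^ (1 / α) / 2) ^ 3 ∧
      (c * (10 * (c * (2 * t ^ 5) ^ α))) ^ α < t ^ 2 := by
  have hsmall : ∀ f : ℝ → ℝ, Continuous f → f 0 = 0 → ∀ δ > 0, ∀ᶠ t in 𝓝[>] (0 : ℝ), f t < δ :=
    fun f hf hf0 δ hδ =>
      ((hf.tendsto' 0 0 hf0).mono_left nhdsWithin_le_nhds).eventually_lt_const hδ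
  have hpow : Continuous fun t : ℝ => c * (t ^ 2 + t ^ 5) ^ α + 10 * (c * (2 * t ^ 5) ^ α) := by
    fun_prop (disch := exact hα.le)
  filter_upwards [self_mem_nhdsWithin,
    hsmall (fun t => t ^ 2 + t ^ 5) (by fun_prop) (by simp) ε hε,
    hsmall _ hpow (by simp [Real.zero_rpow hα.ne']) _ (lt_min one_pos hε),
    eventually_mul_rpow_lt_rpow (e₁ := 2 * (1 / α) * 3) (e₂ := 5 * α * 2)
      (by field_simp; nlinarith) (26 ^ 2 * c ^ 2 * (2 ^ α) ^ 2 * (8 * c ^ 3)),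
    eventually_mul_rpow_lt_rpow (e₁ := 2) (e₂ := 5 * α * α)
      (by nlinarith) ((10 * c ^ 2 * 2 ^ α) ^ α)]
    with t (ht : 0 < t) h1 h2 h3 h4
  refine ⟨ht, h1, h2, ?_, ?_⟩
  · have hX : (t ^ (5 * α)) ^ 2 = t ^ (5 * α * 2) := by
      rw [← Real.rpow_mul_natCast ht.le]; norm_num
    have hY : ((t ^ 2) ^ (1 / α)) ^ 3 = t ^ (2 * (1 / α) * 3) := by
      rw [← Real.rpow_natCast_mul ht.le, ← Real.rpow_mul_natCast ht.le]; norm_num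
    rw [rpow_mul_pow zero_le_two ht.le, Nat.cast_ofNat, one_div_mul_eq_div, div_div, div_pow, hY,
      lt_div_iff₀ (by positivity)]
    calc _ = 26 ^ 2 * c ^ 2 * (2 ^ α) ^ 2 * (8 * c ^ 3) * (t ^ (5 * α)) ^ 2 := by ring
      _ < _ := hX ▸ h3
  · have hX : (t ^ (5 * α)) ^ α = t ^ (5 * α * α) := by rw [← Real.rpow_mul ht.le]
    rw [rpow_mul_pow zero_le_two ht.le, Nat.cast_ofNat]
    calc _ = (10 * c ^ 2 * 2 ^ α) ^ α * (t ^ (5 * α)) ^ α := by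
          rw [← Real.mul_rpow (by positivity) (by positivity)]; ring_nf
      _ < _ := by simpa only [hX, Real.rpow_two] using h4

lemma exists_cuspPoint_images_of_holder {U : Set ℂ²} {F : ℂ² → ℂ²} {c α t : ℝ} (hc : 0 ≤ c)
    (hα : 0 ≤ α) (hF0 : F 0 = 0) (h0U : (0 : ℂ²) ∈ U) (hF : MapsTo F (curveC ∩ U) curveCt)
    (hHol : ∀ p ∈ curveC ∩ U, ∀ q ∈ curveC ∩ U,
      1 / c * ‖p - q‖ ^ (1 / α) ≤ ‖F p - F q‖ ∧ ‖F p - F q‖ ≤ c * ‖p - q‖ ^ α)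
    (ht : 0 ≤ t) (hp : quinticPoint t ∈ curveC ∩ U) (hp' : quinticPoint (-t) ∈ curveC ∩ U) :
    ∃ a b, F (quinticPoint t) = cuspPoint a ∧ F (quinticPoint (-t)) = cuspPoint b ∧
      1 / c * (t ^ 2) ^ (1 / α) ≤ ‖cuspPoint a‖ ∧ ‖cuspPoint a‖ ≤ c * (t ^ 2 + t ^ 5) ^ α ∧
      ‖cuspPoint a - cuspPoint b‖ ≤ c * (2 * t ^ 5) ^ α := by
  have ht' : ‖(t : ℂ)‖ = t := Complex.norm_of_nonneg ht
  have hHol0 := hHol _ hp 0 ⟨by simp [curveC], h0U⟩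
  rw [hF0, sub_zero, sub_zero] at hHol0
  refine ⟨_, _, eq_cuspPoint_of_mem_curveCt (hF hp), eq_cuspPoint_of_mem_curveCt (hF hp'),
    ?_, ?_, ?_⟩ <;> rw [← eq_cuspPoint_of_mem_curveCt (hF hp)]
  · refine le_trans ?_ hHol0.1
    gcongr
    simpa only [ht'] using sq_norm_le_norm_quinticPoint t
  · refine hHol0.2.trans ?_
    gcongr
    simpa only [ht'] using norm_quinticPoint_le t
  · rw [← eq_cuspPoint_of_mem_curveCt (hF hp')]
    refine (hHol _ hp _ hp').2.trans ?_
    gcongr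
    simpa only [ht'] using norm_quinticPoint_sub_neg_le t

theorem sq_le_three_fifths_of_biHolderGerm {α : ℝ} (hα : 0 < α)
    (h : BiHolderGerm curveC curveCt α) : α ^ 2 ≤ 3 / 5 := by
  obtain ⟨U, V, F, c, hU, hV, h0U, h0V, hc, hF0, hbij, hHol⟩ := h
  by_contra! hα2
  obtain ⟨εU, hεU, hUb⟩ := isOpen_iff.mp hU 0 h0U
  obtain ⟨εV, hεV, hVb⟩ := isOpen_iff.mp hV 0 h0V
  obtain ⟨t, ht, htU, htV, hsheet, hfinal⟩ :=
    (eventually_scale_conditions hc hα hα2 (lt_min hεU hεV)).exists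
  have hS : ∀ u : ℂ, ‖u‖ = t → quinticPoint u ∈ curveC ∩ U := fun u hu =>
    ⟨quinticPoint_mem_curveC u, hUb (mem_ball_zero_iff.2 ((norm_quinticPoint_le u).trans_lt
      (hu ▸ htU.trans_le (min_le_left _ _))))⟩
  have hp := hS t (Complex.norm_of_nonneg ht.le)
  have hp' := hS (-t) (by rw [norm_neg, Complex.norm_of_nonneg ht.le])
  obtain ⟨a, b, hPa, hPb, hP_low, hP, hd⟩ := exists_cuspPoint_images_of_holder hc.le hα.le hF0
    h0U (fun _ hz => (hbij.mapsTo hz).1) hHol ht.le hp hp'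
  have hB : 0 ≤ c * (2 * t ^ 5) ^ α := by positivity
  have ha : ‖a‖ ≤ 1 := (sq_le_one_iff₀ (norm_nonneg a)).1
    ((sq_norm_le_norm_cuspPoint a).trans (by linarith [min_le_left 1 (min εU εV)]))
  have hab : 26 * ‖cuspPoint a - cuspPoint b‖ < ‖a‖ ^ 3 := by
    refine lt_of_pow_lt_pow_left₀ 2 (by positivity) ?_
    calc (26 * ‖cuspPoint a - cuspPoint b‖) ^ 2 ≤ (26 * (c * (2 * t ^ 5) ^ α)) ^ 2 := by gcongr
      _ < (1 / c * (t ^ 2) ^ (1 / α) / 2) ^ 3 := hsheet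
      _ ≤ (‖a‖ ^ 2) ^ 3 := by gcongr; linarith [norm_cuspPoint_le ha]
      _ = (‖a‖ ^ 3) ^ 2 := by ring
  have hV' : closedBall (cuspPoint a) (10 * ‖cuspPoint a - cuspPoint b‖) ⊆ V := fun Q hQ =>
    hVb (mem_ball_zero_iff.2 (by
      linarith [norm_le_norm_add_norm_sub' Q (cuspPoint a), mem_closedBall_iff_norm.1 hQ,
        min_le_right 1 (min εU εV), min_le_right εU εV]))
  have hinv : ∀ z ∈ curveC ∩ U, ∀ w ∈ curveC ∩ U, ‖z - w‖ ≤ (c * ‖F z - F w‖) ^ α :=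
    fun z hz w hw => le_mul_rpow_of_one_div_mul_rpow_le (norm_nonneg _) hc hα (hHol z hz w hw).1
  refine hfinal.not_ge ((sq_le_rpow_of_bijOn hc.le hα hbij hinv ht hp.2 hp'.2 hPa hPb ha hab
    hV').trans ?_)
  gcongr

theorem biHolder_implies_alpha_pow_four_le_general {α : ℝ} (hα : 0 < α)
    (h : BiHolderGerm curveC curveCt α) : α ^ 4 ≤ 1 / 2 := by
  nlinarith [sq_le_three_fifths_of_biHolderGerm hα h, sq_nonneg α]

/-- If there is a bi-`α`-Hölder homeomorphism between the germs at `0` of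
`y² = x⁵` and `y² = x³`, then `α⁴ ≤ 1/2`. -/
theorem biHolder_implies_alpha_pow_four_le {α : ℝ} (hα : 0 < α) (hα1 : α ≤ 1)
    (h : BiHolderGerm curveC curveCt α) : α ^ 4 ≤ 1 / 2 :=
  biHolder_implies_alpha_pow_four_le_general hα h
end

section
/- Let C̃ = {(x, |x·log|x||) : x ∈ ℝ, x ≠ 0} ∪ {(0,0)} ⊆ ℝ². The map h : ℝ → C̃ defined by h(x) = (x, |x·log|x||) for x ≠ 0 and h(0) = (0,0) is a homeomorphism onto C̃, and h and h⁻¹ are both log-Lipschitz on a neighborhood of the origin; in particular, h is a bi-α-Hölder homeomorphism (ℝ, 0) → (C̃, 0) for every α ∈ (0, 1). -/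
open Metric

/-- The map `h(x) = (x, |x log|x||)` (with `h(0) = (0,0)`, since `Real.log 0 = 0`). -/
noncomputable def hmap (x : ℝ) : ℝ × ℝ := (x, |x * Real.log (abs x)|)

/-- The curve `C̃ = {(x, |x log|x||)} ⊆ ℝ²`. -/
noncomputable def Ctilde : Set (ℝ × ℝ) := {p | p.2 = |p.1 * Real.log (abs p.1)|}

/-!
Everything reduces to the modulus of continuity of `|x log|x||`. For `0 ≤ a ≤ b ≤ 1`,
`b log b - a log a = (b - a) log b + a log (b / a)`, where `|log b| ≤ |log (b - a)|` and
`a log (b / a) ≤ b - a` by `log t ≤ t - 1`; as `t (|log t| + 1)` increases on `[0, 1]`, this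
gives `‖h x - h y‖ ≤ d (|log d| + 1)` with `d = |x - y|` near `0`. For small `d` this is at most
`2 d |log d|`, and at most a multiple of `d ^ α` because `d ^ (1 - α) |log d|` is bounded.
The reverse Hölder bound comes from `d ≤ d ^ α ≤ ‖h x - h y‖ ^ α`.
-/

open Real

lemma mul_log_sub_log_le_sub {a b : ℝ} (ha : 0 ≤ a) (hab : a ≤ b) :
    a * (log b - log a) ≤ b - a := by
  rcases ha.eq_or_lt with rfl | ha
  · simpa using hab
  · have hb : 0 < b := ha.trans_le hab
    calc a * (log b - log a) = a * log (b / a) := by rw [log_div hb.ne' ha.ne']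
      _ ≤ a * (b / a - 1) := by gcongr; exact log_le_sub_one_of_pos (by positivity)
      _ = b - a := by field_simp

lemma monotoneOn_mul_abs_log_add_one :
    MonotoneOn (fun t => t * (|log t| + 1)) (Set.Icc 0 1) := by
  rintro s ⟨hs, -⟩ t ⟨-, ht⟩ hst
  have hlog_s : log s ≤ 0 := log_nonpos hs (hst.trans ht)
  have hlog_t : log t ≤ 0 := log_nonpos (hs.trans hst) ht
  simp only [abs_of_nonpos hlog_s, abs_of_nonpos hlog_t]
  have := mul_log_sub_log_le_sub hs hst
  nlinarith [mul_nonneg (sub_nonneg.2 hst) (neg_nonneg.2 hlog_t)]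

lemma abs_mul_log_sub_mul_log_le {a b : ℝ} (ha : 0 ≤ a) (hab : a ≤ b) (hb : b ≤ 1) :
    |b * log b - a * log a| ≤ (b - a) * (|log (b - a)| + 1) := by
  rcases hab.eq_or_lt with rfl | hab
  · simp
  have hlog_b : |log b| ≤ |log (b - a)| := by
    rw [abs_of_nonpos (log_nonpos (ha.trans hab.le) hb),
      abs_of_nonpos (log_nonpos (by linarith) (by linarith))]
    linarith [log_le_log (sub_pos.2 hab) (by linarith : b - a ≤ b)]
  have hlog_ba : |a * (log b - log a)| ≤ b - a := by
    rcases ha.eq_or_lt with rfl | ha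
    · simpa using hab.le
    rw [abs_of_nonneg (mul_nonneg ha.le (sub_nonneg.2 (log_le_log ha hab.le)))]
    exact mul_log_sub_log_le_sub ha.le hab.le
  calc |b * log b - a * log a| = |(b - a) * log b + a * (log b - log a)| := by ring_nf
    _ ≤ (b - a) * |log b| + (b - a) := by
        grw [abs_add_le, abs_mul, abs_of_nonneg (sub_nonneg.2 hab.le), hlog_ba]
    _ ≤ (b - a) * (|log (b - a)| + 1) := by nlinarith

lemma abs_abs_mul_log_abs_sub_le {x y : ℝ} (hx : |x| ≤ 1) (hy : |y| ≤ 1) (hxy : |x - y| ≤ 1) :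
    abs (|x * log (abs x)| - |y * log (abs y)|) ≤ |x - y| * (|log (abs (x - y))| + 1) := by
  wlog h : |y| ≤ |x| generalizing x y
  · rw [abs_sub_comm, abs_sub_comm x y]
    exact this hy hx (by rwa [abs_sub_comm]) (le_of_not_ge h)
  calc _ ≤ abs (|x| * log |x| - |y| * log |y|) := by
        simpa only [abs_mul, abs_abs] using
          abs_abs_sub_abs_le_abs_sub (|x| * log |x|) (|y| * log |y|)
    _ ≤ (|x| - |y|) * (|log (|x| - |y|)| + 1) := abs_mul_log_sub_mul_log_le (abs_nonneg y) h hx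
    _ ≤ |x - y| * (|log (abs (x - y))| + 1) :=
        monotoneOn_mul_abs_log_add_one ⟨sub_nonneg.2 h, by linarith [abs_nonneg y]⟩
          ⟨abs_nonneg _, hxy⟩ (abs_sub_abs_le_abs_sub x y)

lemma norm_hmap_sub_le {x y : ℝ} (hx : |x| ≤ 1) (hy : |y| ≤ 1) (hxy : |x - y| ≤ 1) :
    ‖hmap x - hmap y‖ ≤ |x - y| * (|log (abs (x - y))| + 1) := by
  refine max_le ?_ (abs_abs_mul_log_abs_sub_le hx hy hxy)
  exact le_mul_of_one_le_right (abs_nonneg _) (le_add_of_nonneg_left (abs_nonneg _))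

lemma mul_abs_log_add_one_le_two_mul {d : ℝ} (hd0 : 0 ≤ d) (hd : d ≤ exp (-1)) :
    d * (|log d| + 1) ≤ 2 * d * |log d| := by
  rcases hd0.eq_or_lt with rfl | hd0
  · simp
  have hlog : log d ≤ -1 := (log_le_iff_le_exp hd0).2 hd
  rw [abs_of_nonpos (by linarith)]
  nlinarith

lemma mul_abs_log_add_one_le_rpow {d α : ℝ} (hd0 : 0 ≤ d) (hd1 : d ≤ 1) (hα1 : α < 1) :
    d * (|log d| + 1) ≤ (1 / (1 - α) + 1) * d ^ α := by
  have hα1' : 0 < 1 - α := by linarith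
  rcases hd0.eq_or_lt with rfl | hd0
  · simp only [zero_mul]
    positivity
  have hlog : |log d * d ^ (1 - α)| < 1 / (1 - α) :=
    abs_log_mul_self_rpow_lt d (1 - α) hd0 hd1 (by linarith)
  have hsplit : d ^ α * d ^ (1 - α) = d := by
    rw [← rpow_add hd0]; simp
  have hdα : d ≤ d ^ α := self_le_rpow_of_le_one hd0.le hd1 hα1.le
  calc d * (|log d| + 1) = d ^ α * |log d * d ^ (1 - α)| + d := by
        rw [abs_mul, abs_of_pos (by positivity : 0 < d ^ (1 - α))]
        linear_combination (-|log d|) * hsplit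
    _ ≤ d ^ α * (1 / (1 - α)) + d ^ α := by gcongr
    _ = (1 / (1 - α) + 1) * d ^ α := by ring

lemma continuous_hmap : Continuous hmap :=
  continuous_id.prodMk <|
    (continuous_mul_log.comp continuous_abs).abs.congr fun x => by simp [abs_mul]

lemma abs_sub_le_norm_hmap_sub (x y : ℝ) : |x - y| ≤ ‖hmap x - hmap y‖ :=
  norm_fst_le (hmap x - hmap y)

lemma norm_hmap_sub_le_two_mul_abs_log {x y : ℝ} (hx : |x| < exp (-1) / 2)
    (hy : |y| < exp (-1) / 2) :
    ‖hmap x - hmap y‖ ≤ 2 * |x - y| * |log (abs (x - y))| := by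
  have hd : |x - y| < exp (-1) := by linarith [abs_sub x y]
  have he : exp (-1) ≤ 1 := exp_le_one_iff.2 (by norm_num)
  exact (norm_hmap_sub_le (by linarith) (by linarith) (by linarith)).trans
    (mul_abs_log_add_one_le_two_mul (abs_nonneg _) hd.le)

lemma norm_hmap_sub_le_rpow {x y α : ℝ} (hα1 : α < 1) (hx : |x| < 1 / 2) (hy : |y| < 1 / 2) :
    ‖hmap x - hmap y‖ ≤ (1 / (1 - α) + 1) * |x - y| ^ α := by
  have hd : |x - y| < 1 := by linarith [abs_sub x y]
  exact (norm_hmap_sub_le (by linarith) (by linarith) hd.le).trans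
    (mul_abs_log_add_one_le_rpow (abs_nonneg _) hd.le hα1)

lemma abs_sub_le_norm_hmap_sub_rpow {x y α : ℝ} (hα0 : 0 < α) (hα1 : α < 1)
    (hx : |x| < 1 / 2) (hy : |y| < 1 / 2) :
    |x - y| ≤ (1 / (1 - α) + 1) * ‖hmap x - hmap y‖ ^ α := by
  have hd : |x - y| < 1 := by linarith [abs_sub x y]
  have hK : 1 ≤ 1 / (1 - α) + 1 := le_add_of_nonneg_left (by rw [one_div_nonneg]; linarith)
  calc |x - y| ≤ |x - y| ^ α := self_le_rpow_of_le_one (abs_nonneg _) hd.le hα1.le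
    _ ≤ ‖hmap x - hmap y‖ ^ α := by gcongr; exact abs_sub_le_norm_hmap_sub x y
    _ ≤ (1 / (1 - α) + 1) * ‖hmap x - hmap y‖ ^ α := le_mul_of_one_le_left (by positivity) hK

/-- `h(x) = (x, |x log|x||)` is a homeomorphism of `ℝ` onto `C̃ = {(x, |x log|x||)}`
(its inverse being the first-coordinate projection, which is Lipschitz), `h` is
log-Lipschitz near `0`, and `h` is a bi-`α`-Hölder homeomorphism of germs
`(ℝ,0) → (C̃,0)` for every `α ∈ (0,1)`. -/
theorem hmap_biLogLipschitz :
    Set.BijOn hmap Set.univ Ctilde ∧ Continuous hmap ∧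
    (∀ p ∈ Ctilde, hmap p.1 = p) ∧
    (∃ δ > (0:ℝ), ∃ K > (0:ℝ), ∀ x y : ℝ, |x| < δ → |y| < δ → |x - y| < 1 →
      ‖hmap x - hmap y‖ ≤ K * |x - y| * |Real.log (abs (x - y))|) ∧
    (∀ p q : ℝ × ℝ, |p.1 - q.1| ≤ ‖p - q‖) ∧
    (∀ α : ℝ, 0 < α → α < 1 → ∃ δ > (0:ℝ), ∃ K > (0:ℝ), ∀ x y : ℝ, |x| < δ → |y| < δ →
      ‖hmap x - hmap y‖ ≤ K * |x - y| ^ α ∧ |x - y| ≤ K * ‖hmap x - hmap y‖ ^ α) := by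
  have hCtilde : ∀ p ∈ Ctilde, hmap p.1 = p := fun p hp => Prod.ext rfl hp.symm
  refine ⟨⟨fun x _ => rfl, fun x _ y _ h => congrArg Prod.fst h,
      fun p hp => ⟨p.1, Set.mem_univ _, hCtilde p hp⟩⟩,
    continuous_hmap, hCtilde,
    ⟨exp (-1) / 2, by positivity, 2, two_pos,
      fun x y hx hy _ => norm_hmap_sub_le_two_mul_abs_log hx hy⟩,
    fun p q => norm_fst_le (p - q),
    fun α hα0 hα1 => ⟨1 / 2, one_half_pos, 1 / (1 - α) + 1, ?_, ?_⟩⟩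
  · have : 0 < 1 - α := by linarith
    positivity
  · exact fun x y hx hy =>
      ⟨norm_hmap_sub_le_rpow hα1 hx hy, abs_sub_le_norm_hmap_sub_rpow hα0 hα1 hx hy⟩
end

section
/- Let C̃ = {(x, |x·log|x||) : x ∈ ℝ} ∪ {(0,0)} ⊆ ℝ². Then the germ (C̃, 0) is not bi-Lipschitz homeomorphic to (ℝ, 0): there is no homeomorphism F between neighborhoods of 0 in C̃ and in ℝ with F(0) = 0 and (1/c)‖p−q‖ ≤ |F(p)−F(q)| ≤ c‖p−q‖ for some c > 0. -/
/-!
The points over `x` and `-x` on `C̃` are `2x` apart, but each lies at distance at least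
`|x log x|` from the origin. On the arc of `C̃` over `[-x, x]`, a bi-Lipschitz `F : C̃ → ℝ` is a
continuous injective, hence monotone, function of the abscissa, so `F (0, 0)` lies between the
images of the two points. The bi-Lipschitz bounds then give `2 |x log x| ≤ c² · 2x`, which fails
as `x → 0⁺`.
-/

open Metric

open Set Filter

theorem abs_sub_eq_abs_sub_add_abs_sub_of_injOn_Icc {α : Type*}
    [ConditionallyCompleteLinearOrder α] [TopologicalSpace α] [OrderTopology α] [DenselyOrdered α]
    {f : α → ℝ} {a b t : α}
    (hf : ContinuousOn f (Icc a b)) (hinj : InjOn f (Icc a b)) (ht : t ∈ Icc a b) :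
    |f b - f a| = |f b - f t| + |f t - f a| := by
  have ha : a ∈ Icc a b := left_mem_Icc.2 (ht.1.trans ht.2)
  have hb : b ∈ Icc a b := right_mem_Icc.2 (ht.1.trans ht.2)
  rcases hf.strictMonoOn_of_injOn_Icc' (ht.1.trans ht.2) hinj with hmono | hanti
  · have h₁ := hmono.monotoneOn ha ht ht.1
    have h₂ := hmono.monotoneOn ht hb ht.2
    rw [abs_of_nonneg (by linarith), abs_of_nonneg (by linarith), abs_of_nonneg (by linarith)]
    ring
  · have h₁ := hanti.antitoneOn ha ht ht.1
    have h₂ := hanti.antitoneOn ht hb ht.2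
    rw [abs_of_nonpos (by linarith), abs_of_nonpos (by linarith), abs_of_nonpos (by linarith)]
    ring

def IsBiLipschitzOn {E : Type*} [SeminormedAddCommGroup E] (F : E → ℝ) (s : Set E) (c : ℝ) :
    Prop :=
  ∀ p ∈ s, ∀ q ∈ s, (1 / c) * ‖p - q‖ ≤ |F p - F q| ∧ |F p - F q| ≤ c * ‖p - q‖

namespace IsBiLipschitzOn

variable {E : Type*} [NormedAddCommGroup E] {F : E → ℝ} {s : Set E} {c : ℝ}

theorem continuousOn (hF : IsBiLipschitzOn F s c) : ContinuousOn F s := by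
  refine (LipschitzOnWith.of_dist_le_mul fun p hp q hq => ?_).continuousOn (K := c.toNNReal)
  rw [Real.dist_eq, dist_eq_norm]
  exact (hF p hp q hq).2.trans (by gcongr; exact Real.le_coe_toNNReal c)

theorem injOn (hF : IsBiLipschitzOn F s c) (hc : 0 < c) : InjOn F s := fun p hp q hq hpq => by
  have h := (hF p hp q hq).1
  rw [hpq, sub_self, abs_zero] at h
  exact sub_eq_zero.1 (norm_le_zero_iff.1 (nonpos_of_mul_nonpos_right h (by positivity)))

theorem norm_sub_add_norm_sub_le {γ : ℝ → E} {a b t : ℝ} (hF : IsBiLipschitzOn F s c) (hc : 0 < c)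
    (hγ : ContinuousOn γ (Icc a b)) (hγinj : InjOn γ (Icc a b)) (hγs : MapsTo γ (Icc a b) s)
    (ht : t ∈ Icc a b) :
    ‖γ b - γ t‖ + ‖γ t - γ a‖ ≤ c ^ 2 * ‖γ b - γ a‖ := by
  have ha : a ∈ Icc a b := left_mem_Icc.2 (ht.1.trans ht.2)
  have hb : b ∈ Icc a b := right_mem_Icc.2 (ht.1.trans ht.2)
  have hadd : |F (γ b) - F (γ a)| = |F (γ b) - F (γ t)| + |F (γ t) - F (γ a)| :=
    abs_sub_eq_abs_sub_add_abs_sub_of_injOn_Icc (f := F ∘ γ) (hF.continuousOn.comp hγ hγs)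
      ((hF.injOn hc).comp hγinj hγs) ht
  have h₁ := (hF _ (hγs hb) _ (hγs ht)).1
  have h₂ := (hF _ (hγs ht) _ (hγs ha)).1
  have h₃ := (hF _ (hγs hb) _ (hγs ha)).2
  have key : (1 / c) * (‖γ b - γ t‖ + ‖γ t - γ a‖) ≤ c * ‖γ b - γ a‖ := by linarith
  calc ‖γ b - γ t‖ + ‖γ t - γ a‖ = c * ((1 / c) * (‖γ b - γ t‖ + ‖γ t - γ a‖)) := by
        field_simp
    _ ≤ c * (c * ‖γ b - γ a‖) := by gcongr
    _ = c ^ 2 * ‖γ b - γ a‖ := by ring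

end IsBiLipschitzOn

noncomputable def ctildeParam (x : ℝ) : ℝ × ℝ := (x, |x * Real.log (abs x)|)

theorem ctildeParam_mem (x : ℝ) : ctildeParam x ∈ Ctilde := by simp [Ctilde, ctildeParam]

@[simp] theorem ctildeParam_zero : ctildeParam 0 = 0 := by simp [ctildeParam]

theorem ctildeParam_injective : Function.Injective ctildeParam :=
  fun _ _ h => congrArg Prod.fst h

theorem continuous_ctildeParam : Continuous ctildeParam := by
  refine continuous_id.prodMk ?_
  simpa only [Real.log_abs] using Real.continuous_mul_log.abs

theorem norm_ctildeParam_sub_ctildeParam_neg (x : ℝ) :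
    ‖ctildeParam x - ctildeParam (-x)‖ = 2 * |x| := by
  simp [ctildeParam, Prod.norm_def, ← two_mul, abs_mul]

theorem abs_mul_log_le_norm_ctildeParam (x : ℝ) : |x * Real.log (abs x)| ≤ ‖ctildeParam x‖ :=
  (norm_snd_le (ctildeParam x)).trans_eq' (by simp [ctildeParam])

theorem exists_mem_Ioo_lt_abs_mul_log (K : ℝ) {r : ℝ} (hr : 0 < r) :
    ∃ x ∈ Ioo 0 r, K * x < |x * Real.log (abs x)| := by
  obtain ⟨x, hlog, hx⟩ := ((Real.tendsto_log_nhdsGT_zero.eventually (eventually_lt_atBot (-K))).and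
    (Ioo_mem_nhdsGT hr)).exists
  refine ⟨x, hx, ?_⟩
  rw [abs_of_pos hx.1]
  nlinarith [neg_le_abs (x * Real.log x), hx.1]

/-- The germ at `0` of the graph `C̃ = {(x, |x log|x||)}` is not bi-Lipschitz
homeomorphic to `(ℝ, 0)`. -/
theorem Ctilde_not_biLipschitz_to_line :
    ¬ ∃ (U : Set (ℝ × ℝ)) (V : Set ℝ) (F : ℝ × ℝ → ℝ) (c : ℝ),
        IsOpen U ∧ IsOpen V ∧ ((0, 0) : ℝ × ℝ) ∈ U ∧ (0 : ℝ) ∈ V ∧ 0 < c ∧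
        F (0, 0) = 0 ∧ Set.BijOn F (Ctilde ∩ U) V ∧
        ∀ p ∈ Ctilde ∩ U, ∀ q ∈ Ctilde ∩ U,
          (1 / c) * ‖p - q‖ ≤ |F p - F q| ∧ |F p - F q| ≤ c * ‖p - q‖ := by
  rintro ⟨U, -, F, c, hU, -, h0U, -, hc, -, -, hF⟩
  obtain ⟨ε, hε, hεU⟩ : ∃ ε > 0, ball 0 ε ⊆ ctildeParam ⁻¹' U :=
    Metric.mem_nhds_iff.1 (continuous_ctildeParam.continuousAt.preimage_mem_nhds
      (by rw [ctildeParam_zero]; exact hU.mem_nhds h0U))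
  obtain ⟨x, ⟨hx, hxε⟩, hlog⟩ := exists_mem_Ioo_lt_abs_mul_log (c ^ 2) hε
  have hmaps : MapsTo ctildeParam (Icc (-x) x) (Ctilde ∩ U) := fun y hy =>
    ⟨ctildeParam_mem y, hεU (mem_ball_zero_iff.2 ((abs_le.2 hy).trans_lt hxε))⟩
  have harc := IsBiLipschitzOn.norm_sub_add_norm_sub_le (t := 0) hF hc
    continuous_ctildeParam.continuousOn ctildeParam_injective.injOn hmaps ⟨by linarith, hx.le⟩
  have hnorm_neg := abs_mul_log_le_norm_ctildeParam (-x)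
  rw [ctildeParam_zero, sub_zero, zero_sub, norm_neg, norm_ctildeParam_sub_ctildeParam_neg,
    abs_of_pos hx] at harc
  rw [abs_neg, neg_mul, abs_neg] at hnorm_neg
  linarith [abs_mul_log_le_norm_ctildeParam x]
end
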